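/- Let R be a field and x ∈ X. Then ℙ_{[x]} is irreducible for the family of operators {P_A, S_a, S_a*}: every nonzero submodule Y ⊆ ℙ_{[x]} invariant under all P_{Z_μ} (μ a finite word, Z_μ the cylinder of μ) and under all S_c S_d* (c, d finite words) equals ℙ_{[x]}. -/

import Mathlib

/-- The iterated shift: `shiftN x n = σⁿ(x)`. -/
def shiftN {A : Type*} (x : ℕ → A) (n : ℕ) : ℕ → A := fun k => x (k + n)

/-- Tail equivalence: `x ∼ y` iff `σⁿ(x) = σᵐ(y)` for some `n, m ∈ ℕ`. -/
def tailEq {A : Type*} (x y : ℕ → A) : Prop := ∃ n m : ℕ, shiftN x n = shiftN y m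

/-- Concatenation of a finite word with an infinite sequence. -/
def wcat {A : Type*} (w : List A) (x : ℕ → A) : ℕ → A :=
  fun n => if h : n < w.length then w.get ⟨n, h⟩ else x (n - w.length)

/-- The language of `X`: finite words appearing in some element of `X`. -/
def inLang {A : Type*} (X : Set (ℕ → A)) (w : List A) : Prop :=
  ∃ x ∈ X, ∃ k : ℕ, ∀ i (h : i < w.length), w.get ⟨i, h⟩ = x (k + i)

/-- The periodic infinite word `w^∞`. -/
def perInf {A : Type*} (w : List A) (h : w ≠ []) : ℕ → A :=
  fun n => w.get ⟨n % w.length, Nat.mod_lt n (List.length_pos_iff.mpr h)⟩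

/-- `q` is a line path in `X`. -/
def IsLinePath {A : Type*} (X : Set (ℕ → A)) (q : ℕ → A) : Prop :=
  q ∈ X ∧ {x | x ∈ X ∧ x 0 = q 0} = {q} ∧
    ∀ (β : List A) (hβ : β ≠ []) (k : ℕ), shiftN q k ≠ perInf β hβ


variable {A : Type*} (R : Type*) [Field R] (X : Set (ℕ → A))

open Classical

/-- Projection `P_B(δ_x) = [x ∈ B] δ_x` on the free module on `X`. -/
noncomputable def Pop (B : Set (ℕ → A)) : (↥X →₀ R) →ₗ[R] (↥X →₀ R) :=
  Finsupp.lsum R fun x => if (x : ℕ → A) ∈ B then Finsupp.lsingle x else 0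

/-- `S_a(δ_x) = [ax ∈ X] δ_{ax}`. -/
noncomputable def Sop (a : A) : (↥X →₀ R) →ₗ[R] (↥X →₀ R) :=
  Finsupp.lsum R fun x =>
    if h : wcat [a] (x : ℕ → A) ∈ X then Finsupp.lsingle (⟨wcat [a] (x : ℕ → A), h⟩ : ↥X) else 0

/-- `S_a^*(δ_x) = [x₀ = a] δ_{σ(x)}`, needing shift invariance of `X`. -/
noncomputable def SstarOp (hX : ∀ x ∈ X, shiftN x 1 ∈ X) (a : A) :
    (↥X →₀ R) →ₗ[R] (↥X →₀ R) :=
  Finsupp.lsum R fun x =>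
    if (x : ℕ → A) 0 = a then
      Finsupp.lsingle (⟨shiftN (x : ℕ → A) 1, hX x x.2⟩ : ↥X) else 0

/-- `S_α = S_{α₁} ∘ ⋯ ∘ S_{αₙ}`. -/
noncomputable def SwordOp (β : List A) : (↥X →₀ R) →ₗ[R] (↥X →₀ R) :=
  (β.map (Sop R X)).foldr (· ∘ₗ ·) LinearMap.id

/-- `S_α^* = S_{αₙ}^* ∘ ⋯ ∘ S_{α₁}^*`. -/
noncomputable def SstarWordOp (hX : ∀ x ∈ X, shiftN x 1 ∈ X) (α : List A) :
    (↥X →₀ R) →ₗ[R] (↥X →₀ R) :=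
  (α.map (SstarOp R X hX)).foldl (fun acc f => f ∘ₗ acc) LinearMap.id

/-- `C(α,β) = {βx ∈ X : αx ∈ X}`. -/
def Cset (α β : List A) : Set (ℕ → A) :=
  {y | ∃ x : ℕ → A, y = wcat β x ∧ wcat β x ∈ X ∧ wcat α x ∈ X}

/-- The cylinder `Z_μ`. -/
def Zcyl (μ : List A) : Set (ℕ → A) := {y | y ∈ X ∧ ∃ x : ℕ → A, y = wcat μ x}

/-- `ℙ_{[x]}`: the submodule spanned by `{δ_y : y ∼ x}`. -/
noncomputable def Pclass (x : ℕ → A) : Submodule R (↥X →₀ R) :=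
  Submodule.span R {f | ∃ y : ↥X, tailEq (y : ℕ → A) x ∧ f = Finsupp.single y (1 : R)}

/-!
A nonzero vector `v` of `ℙ_{[x]}` is a finite combination of basis vectors `δ_z`. Pick `y` in its
support: a long enough prefix `μ` of `y` distinguishes `y` from the other points of the support, so
`P_{Z_μ} v` is a nonzero multiple of `δ_y`. If `z ∼ y`, say `σⁿ y = σᵐ z`, then `S_{z₀⋯z_{m-1}}`
composed with `S*_{y₀⋯y_{n-1}}` maps `δ_y` to `δ_z`. Hence an invariant submodule containing `v`
contains every `δ_z` with `z ∼ x`.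
-/

variable {R X}

def initWord (z : ℕ → A) (n : ℕ) : List A := List.ofFn fun i : Fin n => z i

lemma shiftN_shiftN (x : ℕ → A) (a b : ℕ) : shiftN (shiftN x a) b = shiftN x (a + b) := by
  funext k; simp only [shiftN, Nat.add_assoc, Nat.add_comm b]

lemma shiftN_mem (hX : ∀ x ∈ X, shiftN x 1 ∈ X) {x : ℕ → A} (hx : x ∈ X)
    (n : ℕ) : shiftN x n ∈ X := by
  induction n with
  | zero => exact hx
  | succ n ih => rw [← shiftN_shiftN]; exact hX _ ih

lemma initWord_succ (z : ℕ → A) (n : ℕ) : initWord z (n + 1) = initWord z n ++ [z n] := by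
  rw [initWord, List.ofFn_succ', List.concat_eq_append]; rfl

lemma initWord_succ' (z : ℕ → A) (n : ℕ) :
    initWord z (n + 1) = z 0 :: initWord (shiftN z 1) n := by
  simp only [initWord, List.ofFn_succ]; congr 1

lemma wcat_initWord_shiftN (z : ℕ → A) (n : ℕ) : wcat (initWord z n) (shiftN z n) = z := by
  funext k
  simp only [wcat, initWord, List.length_ofFn, List.get_ofFn, shiftN]
  split
  · rfl
  · congr 1; omega

lemma wcat_initWord_apply_of_lt (z w : ℕ → A) {n k : ℕ} (hk : k < n) :
    wcat (initWord z n) w k = z k := by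
  simp [wcat, initWord, hk]

lemma tailEq.symm {x y : ℕ → A} (h : tailEq x y) : tailEq y x :=
  let ⟨n, m, hnm⟩ := h; ⟨m, n, hnm.symm⟩

lemma tailEq.trans {x y z : ℕ → A} (hxy : tailEq x y) (hyz : tailEq y z) : tailEq x z := by
  obtain ⟨n, m, hnm⟩ := hxy
  obtain ⟨k, l, hkl⟩ := hyz
  refine ⟨n + k, l + m, ?_⟩
  rw [← shiftN_shiftN, hnm, shiftN_shiftN, add_comm m, ← shiftN_shiftN, hkl, shiftN_shiftN]

lemma exists_prefix_separating {s : Set (ℕ → A)} (hs : s.Finite) (y : ℕ → A) :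
    ∃ n, ∀ z ∈ s, z ≠ y → ∃ k < n, z k ≠ y k := by
  choose! idx hidx using fun z (h : z ≠ y) => Function.ne_iff.mp h
  obtain ⟨N, hN⟩ := (hs.image idx).bddAbove
  exact ⟨N + 1, fun z hz hzy =>
    ⟨idx z, Nat.lt_succ_of_le (hN ⟨z, hz, rfl⟩), hidx z hzy⟩⟩

lemma mem_Zcyl_initWord_iff {y z : ℕ → A} {n : ℕ} :
    z ∈ Zcyl X (initWord y n) ↔ z ∈ X ∧ ∀ k < n, z k = y k := by
  refine and_congr_right fun _ => ⟨?_, fun h => ⟨shiftN z n, ?_⟩⟩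
  · rintro ⟨w, rfl⟩ k hk
    exact wcat_initWord_apply_of_lt y w hk
  · have : initWord z n = initWord y n := List.ofFn_inj.mpr (funext fun k => h k k.2)
    rw [← this, wcat_initWord_shiftN]

lemma Pop_apply (B : Set (ℕ → A)) (v : ↥X →₀ R) (z : ↥X) :
    Pop R X B v z = if (z : ℕ → A) ∈ B then v z else 0 := by
  induction v using Finsupp.induction_linear with
  | zero => simp
  | add v w hv hw => simp only [map_add, Finsupp.add_apply, hv, hw]; split_ifs <;> simp
  | single y r =>
    simp only [Pop, Finsupp.lsum_single]
    rcases eq_or_ne y z with rfl | hyz <;> split_ifs <;> simp [*]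

lemma exists_Pop_Zcyl_eq_single (v : ↥X →₀ R) (y : ↥X) :
    ∃ n, Pop R X (Zcyl X (initWord y n)) v = Finsupp.single y (v y) := by
  obtain ⟨n, hn⟩ := exists_prefix_separating ((v.support.finite_toSet).image Subtype.val) y
  refine ⟨n, Finsupp.ext fun z => ?_⟩
  by_cases hzy : z = y
  · subst hzy; simp [Pop_apply, mem_Zcyl_initWord_iff]
  rw [Pop_apply, Finsupp.single_apply, if_neg (Ne.symm hzy)]
  split_ifs with hmem
  · rw [mem_Zcyl_initWord_iff] at hmem
    by_contra hvz
    obtain ⟨k, hk, hne⟩ :=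
      hn z ⟨z, Finsupp.mem_support_iff.mpr hvz, rfl⟩ (Subtype.coe_ne_coe.mpr hzy)
    exact hne (hmem.2 k hk)
  · rfl

lemma single_congr_val {w₁ w₂ : ℕ → A} (h : w₁ = w₂) (h₁ : w₁ ∈ X) (h₂ : w₂ ∈ X) (r : R) :
    Finsupp.single (⟨w₁, h₁⟩ : ↥X) r = Finsupp.single ⟨w₂, h₂⟩ r := by
  subst h; rfl

lemma SstarWordOp_initWord_single (hX : ∀ x ∈ X, shiftN x 1 ∈ X) (y : ↥X) (n : ℕ) (r : R) :
    SstarWordOp R X hX (initWord y n) (Finsupp.single y r)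
      = Finsupp.single ⟨shiftN y n, shiftN_mem hX y.2 n⟩ r := by
  induction n with
  | zero => rfl
  | succ n ih =>
    simp only [SstarWordOp, initWord_succ, List.map_append, List.foldl_append] at ih ⊢
    rw [List.map_singleton, List.foldl_cons, List.foldl_nil, LinearMap.comp_apply, ih, SstarOp,
      Finsupp.lsum_single, if_pos (by simp [shiftN]), Finsupp.lsingle_apply]
    exact single_congr_val (shiftN_shiftN _ _ _) _ _ r

lemma SwordOp_initWord_single (hX : ∀ x ∈ X, shiftN x 1 ∈ X) (m : ℕ) (z : ℕ → A) (hz : z ∈ X)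
    (r : R) :
    SwordOp R X (initWord z m) (Finsupp.single ⟨shiftN z m, shiftN_mem hX hz m⟩ r)
      = Finsupp.single ⟨z, hz⟩ r := by
  induction m generalizing z with
  | zero => rfl
  | succ m ih =>
    have hshift : shiftN z (m + 1) = shiftN (shiftN z 1) m := by rw [shiftN_shiftN, add_comm]
    have hhead : wcat [z 0] (shiftN z 1) = z := wcat_initWord_shiftN z 1
    rw [initWord_succ', SwordOp, List.map_cons, List.foldr_cons, ← SwordOp, LinearMap.comp_apply,
      single_congr_val hshift _ (shiftN_mem hX (hX z hz) m), ih _ (hX z hz), Sop,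
      Finsupp.lsum_single, dif_pos (by rw [hhead]; exact hz), Finsupp.lsingle_apply]
    exact single_congr_val hhead _ _ r

lemma SwordOp_comp_SstarWordOp_single (hX : ∀ x ∈ X, shiftN x 1 ∈ X) (y z : ↥X) {n m : ℕ}
    (h : shiftN (y : ℕ → A) n = shiftN z m) (r : R) :
    (SwordOp R X (initWord z m) ∘ₗ SstarWordOp R X hX (initWord y n)) (Finsupp.single y r)
      = Finsupp.single z r := by
  rw [LinearMap.comp_apply, SstarWordOp_initWord_single,
    single_congr_val h _ (shiftN_mem hX z.2 m), SwordOp_initWord_single hX]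

lemma Pclass_eq_supported (x : ℕ → A) :
    Pclass R X x = Finsupp.supported R R {y : ↥X | tailEq (y : ℕ → A) x} := by
  rw [Finsupp.supported_eq_span_single, Pclass]
  congr 1
  ext f
  exact ⟨fun ⟨y, hy, hf⟩ => ⟨y, hy, hf.symm⟩, fun ⟨y, hy, hf⟩ => ⟨y, hy, hf.symm⟩⟩

theorem Pclass_irreducible_general {A : Type*} (R : Type*) [Field R]
    (X : Set (ℕ → A)) (hX : ∀ x ∈ X, shiftN x 1 ∈ X) (x : ℕ → A)
    (Y : Submodule R (↥X →₀ R)) (hYle : Y ≤ Pclass R X x) (hYne : Y ≠ ⊥)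
    (hP : ∀ μ : List A, ∀ v ∈ Y, Pop R X (Zcyl X μ) v ∈ Y)
    (hS : ∀ c d : List A, ∀ v ∈ Y, (SwordOp R X c ∘ₗ SstarWordOp R X hX d) v ∈ Y) :
    Y = Pclass R X x := by
  refine le_antisymm hYle ?_
  obtain ⟨v, hvY, hv0⟩ := (Submodule.ne_bot_iff Y).mp hYne
  obtain ⟨y, hy⟩ := Finsupp.support_nonempty_iff.mpr hv0
  have hyx : tailEq (y : ℕ → A) x := by
    have hv := hYle hvY
    rw [Pclass_eq_supported] at hv
    exact hv hy
  have hδy : Finsupp.single y (1 : R) ∈ Y := by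
    obtain ⟨n, hn⟩ := exists_Pop_Zcyl_eq_single v y
    have h := Y.smul_mem (v y)⁻¹ (hn ▸ hP _ v hvY)
    rwa [Finsupp.smul_single, smul_eq_mul, inv_mul_cancel₀ (Finsupp.mem_support_iff.mp hy)] at h
  rw [Pclass, Submodule.span_le]
  rintro _ ⟨z, hzx, rfl⟩
  obtain ⟨n, m, h⟩ := hyx.trans hzx.symm
  have hδz := hS (initWord z m) (initWord y n) _ hδy
  rwa [SwordOp_comp_SstarWordOp_single hX y z h] at hδz

/-- over a field, every nonzero submodule of `ℙ_{[x]}` invariant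
under the cylinder projections `P_{Z_μ}` and the operators `S_c S_d^*` equals
`ℙ_{[x]}`. -/
theorem Pclass_irreducible {A : Type*} (R : Type*) [Field R]
    (X : Set (ℕ → A)) (hX : ∀ x ∈ X, shiftN x 1 ∈ X) (x : ℕ → A) (hx : x ∈ X)
    (Y : Submodule R (↥X →₀ R)) (hYle : Y ≤ Pclass R X x) (hYne : Y ≠ ⊥)
    (hP : ∀ μ : List A, ∀ v ∈ Y, Pop R X (Zcyl X μ) v ∈ Y)
    (hS : ∀ c d : List A, ∀ v ∈ Y, (SwordOp R X c ∘ₗ SstarWordOp R X hX d) v ∈ Y) :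
    Y = Pclass R X x :=
  Pclass_irreducible_general R X hX x Y hYle hYne hP hS
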